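/- arXiv:1401.6006 — 2 statements merged into one kernel-verified Lean document; each statement's English description precedes it below -/
import Mathlib

section
/- Let V be the algebra of differential polynomials in ℓ variables and let h ∈ V. Then ξ := δh/δu ∈ V^ℓ has self-adjoint Frechet derivative: D_ξ(∂) = D_ξ*(∂), where D_ξ(∂)_{ij} = Σ_n (∂ξ_i/∂u_j^(n)) ∂^n and the adjoint is D_ξ*(∂)_{ij} = Σ_n (-∂)^n ∘ (∂ξ_j/∂u_i^(n)). -/
/-- The total derivative `∂` on `V = F[u_i^(n)]`, with `∂(u_i^(n)) = u_i^(n+1)`. -/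
noncomputable def Del (F : Type) [Field F] (σ : Type) :
    Derivation F (MvPolynomial (σ × ℕ) F) (MvPolynomial (σ × ℕ) F) :=
  MvPolynomial.mkDerivation F (fun p => MvPolynomial.X (p.1, p.2 + 1))

/-- The variational derivative `δh/δu_i = ∑_{n ≥ 0} (-∂)^n (∂h/∂u_i^(n))`. -/
noncomputable def varDer (F : Type) [Field F] (σ : Type)
    (f : MvPolynomial (σ × ℕ) F) (i : σ) : MvPolynomial (σ × ℕ) F :=
  ∑ᶠ n : ℕ, ((-(Del F σ).toLinearMap) ^ n) (MvPolynomial.pderiv (i, n) f)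

/-!
Write `ξ_k = ∑ₘ (-∂)ᵐ (∂h/∂u_k^(m))`. The commutation rule
`∂/∂u_j^(n) ∘ ∂ = ∂ ∘ ∂/∂u_j^(n) + ∂/∂u_j^(n-1)` makes the Frechet derivative intertwine `∂`,
`D_{∂f} = ∂ ∘ D_f`, and dually `D_{∂f}^* = D_f^* ∘ (-∂)`. Hence both `D_ξ g` and `D_ξ^* g` expand to
`∑_{m,n} (-∂)ᵐ ((∂²h/∂u_j^(n)∂u_i^(m)) ∂ⁿg)`, up to exchanging `(i, m)` with `(j, n)`, and the
symmetry of second partial derivatives finishes the proof.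
-/

open MvPolynomial Finset

lemma MvPolynomial.pderiv_comm {R ι : Type*} [CommSemiring R] (p q : ι) (f : MvPolynomial ι R) :
    pderiv p (pderiv q f) = pderiv q (pderiv p f) := by
  classical
  induction f using MvPolynomial.induction_on with
  | C a => simp
  | add f g hf hg => simp [hf, hg]
  | mul_X f k hf =>
    have pderiv_pderiv_X (a b : ι) : pderiv a (pderiv b (X k : MvPolynomial ι R)) = 0 := by
      rcases eq_or_ne k b with rfl | hkb
      · rw [pderiv_X_self, pderiv_one]
      · rw [pderiv_X_of_ne hkb, map_zero]
    simp only [pderiv_mul, map_add, hf, pderiv_pderiv_X]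
    ring

section

variable {F : Type} [Field F] {σ : Type}

lemma del_X (p : σ × ℕ) : Del F σ (X p) = X (p.1, p.2 + 1) :=
  mkDerivation_X _ _ _

lemma pderiv_zero_del (j : σ) (f : MvPolynomial (σ × ℕ) F) :
    pderiv (j, 0) (Del F σ f) = Del F σ (pderiv (j, 0) f) := by
  classical
  suffices ⁅pderiv (j, 0), Del F σ⁆ = 0 by
    rw [← sub_eq_zero, ← Derivation.commutator_apply, this, Derivation.zero_apply]
  refine derivation_ext fun ⟨k, m⟩ => ?_
  by_cases hk : k = j <;>
    simp [Derivation.commutator_apply, del_X, pderiv_X, Pi.single_apply, apply_ite (Del F σ), hk]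

lemma pderiv_succ_del (j : σ) (n : ℕ) (f : MvPolynomial (σ × ℕ) F) :
    pderiv (j, n + 1) (Del F σ f) = Del F σ (pderiv (j, n + 1) f) + pderiv (j, n) f := by
  classical
  suffices ⁅pderiv (j, n + 1), Del F σ⁆ = pderiv (j, n) by
    rw [← this, Derivation.commutator_apply]; abel
  refine derivation_ext fun ⟨k, m⟩ => ?_
  by_cases hk : k = j <;>
    simp [Derivation.commutator_apply, del_X, pderiv_X, Pi.single_apply, apply_ite (Del F σ), hk]

lemma exists_pderiv_eq_zero (f : MvPolynomial (σ × ℕ) F) :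
    ∃ N, ∀ (j : σ) (n : ℕ), N ≤ n → pderiv (j, n) f = 0 := by
  classical
  refine ⟨f.vars.sup Prod.snd + 1, fun j n hn => pderiv_eq_zero_of_notMem_vars fun hmem => ?_⟩
  have := Finset.le_sup (f := Prod.snd) hmem
  dsimp only at this
  omega

variable {M : Type} [AddCommGroup M] [Module F M]

lemma hasFiniteSupport_pderiv (j : σ) (Φ : ℕ → MvPolynomial (σ × ℕ) F →ₗ[F] M)
    (f : MvPolynomial (σ × ℕ) F) : Function.HasFiniteSupport fun n => Φ n (pderiv (j, n) f) := by
  obtain ⟨N, hN⟩ := exists_pderiv_eq_zero f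
  refine (Set.finite_Iio N).subset fun n hn => ?_
  by_contra! hNn
  rw [Set.mem_Iio, not_lt] at hNn
  exact hn (by simp only [hN j n hNn, map_zero])

noncomputable def pderivSum (j : σ) (Φ : ℕ → MvPolynomial (σ × ℕ) F →ₗ[F] M) :
    MvPolynomial (σ × ℕ) F →ₗ[F] M where
  toFun f := ∑ᶠ n, Φ n (pderiv (j, n) f)
  map_add' f g := by
    simp only [map_add]
    exact finsum_add_distrib (hasFiniteSupport_pderiv j Φ f) (hasFiniteSupport_pderiv j Φ g)
  map_smul' c f := by
    simp only [Derivation.map_smul, map_smul, RingHom.id_apply]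
    exact (smul_finsum' (M := M) c (hasFiniteSupport_pderiv j Φ f)).symm

lemma pderivSum_eq_sum_range {j : σ} (Φ : ℕ → MvPolynomial (σ × ℕ) F →ₗ[F] M)
    {f : MvPolynomial (σ × ℕ) F} {N : ℕ} (hN : ∀ n, N ≤ n → pderiv (j, n) f = 0) :
    pderivSum j Φ f = ∑ n ∈ range N, Φ n (pderiv (j, n) f) := by
  refine finsum_eq_sum_of_support_subset _ fun n hn => ?_
  by_contra! hNn
  simp only [coe_range, Set.mem_Iio, not_lt] at hNn
  exact hn (by simp only [hN n hNn, map_zero])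

lemma pderivSum_comp {P : Type} [AddCommGroup P] [Module F P] (j : σ)
    (Φ : ℕ → MvPolynomial (σ × ℕ) F →ₗ[F] M) (T : M →ₗ[F] P) (f : MvPolynomial (σ × ℕ) F) :
    pderivSum j (fun n => T ∘ₗ Φ n) f = T (pderivSum j Φ f) :=
  (map_finsum T (hasFiniteSupport_pderiv j Φ f)).symm

lemma pderivSum_del {j : σ} {Φ Ψ : ℕ → MvPolynomial (σ × ℕ) F →ₗ[F] M}
    (hΦΨ : ∀ n a, Φ n (Del F σ a) + Φ (n + 1) a = Ψ n a) (f : MvPolynomial (σ × ℕ) F) :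
    pderivSum j Φ (Del F σ f) = pderivSum j Ψ f := by
  obtain ⟨N, hN⟩ := exists_pderiv_eq_zero f
  have hN' : ∀ n, N + 1 ≤ n → pderiv (j, n) (Del F σ f) = 0 := by
    rintro (_ | n) hn
    · omega
    · rw [pderiv_succ_del, hN j n (by omega), hN j (n + 1) (by omega), map_zero, add_zero]
  rw [pderivSum_eq_sum_range Φ hN',
    pderivSum_eq_sum_range Ψ (N := N + 1) fun n hn => hN j n (by omega)]
  simp only [← hΦΨ, sum_add_distrib]
  rw [sum_range_succ', sum_range_succ' (fun n => Φ n _), sum_range_succ _ N, hN j N le_rfl]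
  simp only [pderiv_succ_del, pderiv_zero_del, map_add, sum_add_distrib, map_zero]
  abel

/- `frechet j g f = ∑ₙ (∂f/∂u_j^(n)) ∂ⁿg` is the `j`-th entry of the row `D_f(∂)` applied to `g`,
and `frechetAdjoint i g f = ∑ₙ (-∂)ⁿ((∂f/∂u_i^(n)) g)` the `i`-th entry of the column `D_f^*(∂)`. -/
noncomputable def frechet (j : σ) (g : MvPolynomial (σ × ℕ) F) :
    Module.End F (MvPolynomial (σ × ℕ) F) :=
  pderivSum j fun n => LinearMap.mulRight F (((Del F σ).toLinearMap ^ n) g)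

noncomputable def frechetAdjoint (i : σ) (g : MvPolynomial (σ × ℕ) F) :
    Module.End F (MvPolynomial (σ × ℕ) F) :=
  pderivSum i fun n => ((-(Del F σ).toLinearMap) ^ n) ∘ₗ LinearMap.mulRight F g

lemma del_pow_succ_apply (n : ℕ) (g : MvPolynomial (σ × ℕ) F) :
    ((Del F σ).toLinearMap ^ (n + 1)) g = Del F σ (((Del F σ).toLinearMap ^ n) g) := by
  rw [pow_succ', Module.End.mul_apply]; rfl

lemma commute_frechet_del (j : σ) (g : MvPolynomial (σ × ℕ) F) :
    Commute (frechet j g) (Del F σ).toLinearMap := by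
  refine LinearMap.ext fun f => ?_
  change pderivSum j _ (Del F σ f) = Del F σ (pderivSum j _ f)
  rw [pderivSum_del (Ψ := fun n => (Del F σ).toLinearMap ∘ₗ
    LinearMap.mulRight F (((Del F σ).toLinearMap ^ n) g)), pderivSum_comp]
  · rfl
  intro n a
  simp only [LinearMap.mulRight_apply, LinearMap.comp_apply, Derivation.coeFn_coe,
    del_pow_succ_apply, Derivation.leibniz, smul_eq_mul]
  ring

lemma frechet_neg_del_pow (j : σ) (g : MvPolynomial (σ × ℕ) F) (m : ℕ)
    (f : MvPolynomial (σ × ℕ) F) :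
    frechet j g (((-(Del F σ).toLinearMap) ^ m) f)
      = ((-(Del F σ).toLinearMap) ^ m) (frechet j g f) :=
  LinearMap.congr_fun ((commute_frechet_del j g).neg_right.pow_right m).eq f

lemma frechetAdjoint_del (i : σ) (g f : MvPolynomial (σ × ℕ) F) :
    frechetAdjoint i g (Del F σ f) = -frechetAdjoint i (Del F σ g) f := by
  rw [frechetAdjoint, pderivSum_del (Ψ := fun n => (-LinearMap.id) ∘ₗ
    (((-(Del F σ).toLinearMap) ^ n) ∘ₗ LinearMap.mulRight F (Del F σ g))), pderivSum_comp]
  · rfl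
  intro n a
  simp only [LinearMap.mulRight_apply, LinearMap.comp_apply, pow_succ, Module.End.mul_apply,
    LinearMap.neg_apply, Derivation.coeFn_coe, LinearMap.id_apply, Derivation.leibniz,
    smul_eq_mul, ← map_add, ← map_neg]
  congr 1
  ring

lemma frechetAdjoint_neg_del_pow (i : σ) (m : ℕ) (g f : MvPolynomial (σ × ℕ) F) :
    frechetAdjoint i g (((-(Del F σ).toLinearMap) ^ m) f)
      = frechetAdjoint i (((Del F σ).toLinearMap ^ m) g) f := by
  induction m generalizing f with
  | zero => rfl
  | succ m ih =>
    rw [pow_succ, Module.End.mul_apply, ih, LinearMap.neg_apply, map_neg,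
      Derivation.coeFn_coe, frechetAdjoint_del, neg_neg, del_pow_succ_apply]

theorem frechet_varDer_eq_frechetAdjoint (h : MvPolynomial (σ × ℕ) F) (i j : σ)
    (g : MvPolynomial (σ × ℕ) F) :
    frechet j g (varDer F σ h i) = frechetAdjoint i g (varDer F σ h j) := by
  obtain ⟨N, hN⟩ := exists_pderiv_eq_zero h
  have hN₂ (p q : σ) (m : ℕ) : ∀ n, N ≤ n → pderiv (p, n) (pderiv (q, m) h) = 0 := fun n hn => by
    rw [pderiv_comm, hN p n hn, map_zero]
  have varDer_eq_sum (k : σ) : varDer F σ h k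
      = ∑ m ∈ range N, ((-(Del F σ).toLinearMap) ^ m) (pderiv (k, m) h) :=
    pderivSum_eq_sum_range _ (hN k)
  rw [varDer_eq_sum, varDer_eq_sum, map_sum, map_sum]
  simp only [frechet_neg_del_pow, frechetAdjoint_neg_del_pow]
  simp only [frechet, frechetAdjoint, pderivSum_eq_sum_range _ (hN₂ _ _ _), map_sum]
  rw [sum_comm]
  refine sum_congr rfl fun m _ => sum_congr rfl fun n _ => ?_
  simp only [LinearMap.comp_apply, LinearMap.mulRight_apply, pderiv_comm (j, m) (i, n)]

end

theorem stmt11_general (F : Type) [Field F] (ℓ : ℕ)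
    (h : MvPolynomial (Fin ℓ × ℕ) F) (i j : Fin ℓ) (g : MvPolynomial (Fin ℓ × ℕ) F) :
    ∑ᶠ n : ℕ, MvPolynomial.pderiv (j, n) (varDer F (Fin ℓ) h i) *
        ((Del F (Fin ℓ)).toLinearMap ^ n) g
      = ∑ᶠ n : ℕ, ((-(Del F (Fin ℓ)).toLinearMap) ^ n)
          (MvPolynomial.pderiv (i, n) (varDer F (Fin ℓ) h j) * g) :=
  frechet_varDer_eq_frechetAdjoint h i j g

/-- For `ξ = δh/δu`, the Frechet derivative `D_ξ(∂)` is self-adjoint: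
as operators on `V`, for all `i, j`,
`∑_n (∂ξ_i/∂u_j^(n)) ∂^n = ∑_n (-∂)^n ∘ (∂ξ_j/∂u_i^(n) ·)`. -/
theorem stmt11 (F : Type) [Field F] [CharZero F] (ℓ : ℕ)
    (h : MvPolynomial (Fin ℓ × ℕ) F) (i j : Fin ℓ) (g : MvPolynomial (Fin ℓ × ℕ) F) :
    ∑ᶠ n : ℕ, MvPolynomial.pderiv (j, n) (varDer F (Fin ℓ) h i) *
        ((Del F (Fin ℓ)).toLinearMap ^ n) g
      = ∑ᶠ n : ℕ, ((-(Del F (Fin ℓ)).toLinearMap) ^ n)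
          (MvPolynomial.pderiv (i, n) (varDer F (Fin ℓ) h j) * g) :=
  stmt11_general F ℓ h i j g
end

section
/- Let V be an algebra of differential polynomials and H ∈ Mat_{ℓ×ℓ} V((∂^{-1})). The λ-bracket defined by the Master Formula satisfies the left Leibniz rule {f_λ gh} = {f_λ g}h + {f_λ h}g for all f, g, h ∈ V, and the recovery property that the symbol of {u_i ∂ u_j}_H (with ∂ moved to the right) equals H_{ji}(∂). -/
/-- The λ-bracket `{f_λ g}_H ∈ V((λ^{-1}))` of the Master Formula
`{f_λ g}_H = ∑_{i,j,m,n} (∂g/∂u_j^(n)) (λ+∂)^n H_{ji}(λ+∂) (-λ-∂)^m (∂f/∂u_i^(m))`,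
for a matrix pseudodifferential operator `H` with coefficients `H j i N` (the
coefficient of `∂^N`, `N ∈ ℤ`, of `H_{ji}`). The value is the coefficient function
`p ↦` (coefficient of `λ^p`), obtained by expanding all powers of `λ + ∂` (with
generalized binomial coefficients for the integer powers coming from `H`). -/
noncomputable def lambdaBracket (F : Type) [Field F] (ℓ : ℕ)
    (H : Fin ℓ → Fin ℓ → ℤ → MvPolynomial (Fin ℓ × ℕ) F)
    (f g : MvPolynomial (Fin ℓ × ℕ) F) : ℤ → MvPolynomial (Fin ℓ × ℕ) F :=
  fun p =>
    ∑ᶠ (i : Fin ℓ) (j : Fin ℓ) (n : ℕ) (m : ℕ) (N : ℤ) (k₁ : ℕ) (k₃ : ℕ),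
      if 0 ≤ (n : ℤ) + N + m - k₁ - k₃ - p then
        (((-1 : F) ^ m * (n.choose k₁ : F) * (m.choose k₃ : F)) *
            ((Ring.choose N ((n : ℤ) + N + m - k₁ - k₃ - p).toNat : ℤ) : F)) •
          (MvPolynomial.pderiv (j, n) g *
            ((Del F (Fin ℓ)).toLinearMap ^ k₁)
              (H j i N *
                ((Del F (Fin ℓ)).toLinearMap ^ ((n : ℤ) + N + m - k₁ - k₃ - p).toNat)
                  (((Del F (Fin ℓ)).toLinearMap ^ k₃) (MvPolynomial.pderiv (i, m) f))))
      else 0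

namespace MvPolynomial

variable {R σ : Type*} [CommSemiring R]

lemma finite_setOf_pderiv_ne_zero (x : σ) (q : MvPolynomial (σ × ℕ) R) :
    {n : ℕ | pderiv (x, n) q ≠ 0}.Finite :=
  (q.vars.finite_toSet.preimage (Prod.mk_right_injective x).injOn).subset
    fun _ hn => not_imp_comm.mp pderiv_eq_zero_of_notMem_vars hn

lemma finsum_pderiv_mul_mul (x : σ) (a : ℕ → MvPolynomial (σ × ℕ) R)
    (g h : MvPolynomial (σ × ℕ) R) :
    ∑ᶠ n, pderiv (x, n) (g * h) * a n
      = (∑ᶠ n, pderiv (x, n) g * a n) * h + (∑ᶠ n, pderiv (x, n) h * a n) * g := by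
  have hfin (q : MvPolynomial (σ × ℕ) R) :
      (Function.support fun n => pderiv (x, n) q * a n).Finite :=
    (finite_setOf_pderiv_ne_zero x q).subset (Function.support_mul_subset_left _ _)
  rw [finsum_mul' _ _ (hfin g), finsum_mul' _ _ (hfin h),
    ← finsum_add_distrib ((hfin g).subset (Function.support_mul_subset_left _ _))
      ((hfin h).subset (Function.support_mul_subset_left _ _))]
  refine finsum_congr fun n => ?_
  rw [Derivation.leibniz, smul_eq_mul, smul_eq_mul]
  ring

lemma finsum_finsum_finsum_pderiv_mul_mul {ι : Type*} [Finite ι] [Finite σ]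
    (a : ι → σ → ℕ → MvPolynomial (σ × ℕ) R) (g h : MvPolynomial (σ × ℕ) R) :
    ∑ᶠ (i : ι) (x : σ) (n : ℕ), pderiv (x, n) (g * h) * a i x n
      = (∑ᶠ (i : ι) (x : σ) (n : ℕ), pderiv (x, n) g * a i x n) * h
        + (∑ᶠ (i : ι) (x : σ) (n : ℕ), pderiv (x, n) h * a i x n) * g := by
  simp only [finsum_pderiv_mul_mul, finsum_mul' _ _ (Set.toFinite _),
    finsum_add_distrib (Set.toFinite _) (Set.toFinite _)]

end MvPolynomial

lemma Del_pow_apply_one (F : Type) [Field F] (σ : Type) {t : ℕ} (ht : t ≠ 0) :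
    ((Del F σ).toLinearMap ^ t) 1 = 0 := by
  obtain ⟨s, rfl⟩ := Nat.exists_eq_succ_of_ne_zero ht
  rw [pow_succ, Module.End.mul_apply, Derivation.coeFn_coe, Derivation.map_one_eq_zero, map_zero]

noncomputable def masterFormulaCoeff (F : Type) [Field F] (ℓ : ℕ)
    (H : Fin ℓ → Fin ℓ → ℤ → MvPolynomial (Fin ℓ × ℕ) F)
    (f : MvPolynomial (Fin ℓ × ℕ) F) (p : ℤ) (i j : Fin ℓ) (n : ℕ) :
    MvPolynomial (Fin ℓ × ℕ) F :=
  ∑ᶠ (m : ℕ) (N : ℤ) (k₁ : ℕ) (k₃ : ℕ),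
    if 0 ≤ (n : ℤ) + N + m - k₁ - k₃ - p then
      (((-1 : F) ^ m * (n.choose k₁ : F) * (m.choose k₃ : F)) *
          ((Ring.choose N ((n : ℤ) + N + m - k₁ - k₃ - p).toNat : ℤ) : F)) •
        ((Del F (Fin ℓ)).toLinearMap ^ k₁)
          (H j i N *
            ((Del F (Fin ℓ)).toLinearMap ^ ((n : ℤ) + N + m - k₁ - k₃ - p).toNat)
              (((Del F (Fin ℓ)).toLinearMap ^ k₃) (MvPolynomial.pderiv (i, m) f)))
    else 0

section MasterFormula

variable (F : Type) [Field F] (ℓ : ℕ) (H : Fin ℓ → Fin ℓ → ℤ → MvPolynomial (Fin ℓ × ℕ) F)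

lemma lambdaBracket_eq_finsum_pderiv_mul (f g : MvPolynomial (Fin ℓ × ℕ) F) (p : ℤ) :
    lambdaBracket F ℓ H f g p
      = ∑ᶠ (i : Fin ℓ) (j : Fin ℓ) (n : ℕ),
          MvPolynomial.pderiv (j, n) g * masterFormulaCoeff F ℓ H f p i j n := by
  simp only [lambdaBracket, masterFormulaCoeff, mul_finsum, mul_ite, mul_zero, mul_smul_comm]

lemma masterFormulaCoeff_X_zero (i j : Fin ℓ) (p : ℤ) :
    masterFormulaCoeff F ℓ H (MvPolynomial.X (i, 0)) p i j 0 = H j i p := by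
  unfold masterFormulaCoeff
  rw [finsum_eq_single _ 0 fun m hm => by simp [hm]]
  rw [finsum_eq_single _ p fun N hN => ?_]
  · rw [finsum_eq_single _ 0 fun k₁ hk₁ =>
        finsum_eq_zero_of_forall_eq_zero fun k₃ => if_neg (by omega),
      finsum_eq_single _ 0 fun k₃ hk₃ => if_neg (by omega)]
    simp
  refine finsum_eq_zero_of_forall_eq_zero fun k₁ => finsum_eq_zero_of_forall_eq_zero fun k₃ => ?_
  rcases eq_or_ne k₃ 0 with rfl | hk₃
  · rcases eq_or_ne k₁ 0 with rfl | hk₁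
    · rcases hN.lt_or_gt with hlt | hgt
      · exact if_neg (by omega)
      · simp [Del_pow_apply_one F (Fin ℓ) (show (N - p).toNat ≠ 0 by omega)]
    · simp [Nat.choose_eq_zero_of_lt (Nat.pos_of_ne_zero hk₁)]
  · simp [Del_pow_apply_one F (Fin ℓ) hk₃]

lemma lambdaBracket_X_X (i j : Fin ℓ) (p : ℤ) :
    lambdaBracket F ℓ H (MvPolynomial.X (i, 0)) (MvPolynomial.X (j, 0)) p = H j i p := by
  rw [lambdaBracket_eq_finsum_pderiv_mul,
    finsum_eq_single _ i fun i' hi' => by simp [masterFormulaCoeff, hi'.symm],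
    finsum_eq_single _ j fun j' hj' => by simp [hj'.symm],
    finsum_eq_single _ 0 fun n hn => by simp [Ne.symm hn]]
  simpa using masterFormulaCoeff_X_zero F ℓ H i j p

end MasterFormula

theorem stmt17_general (F : Type) [Field F] (ℓ : ℕ)
    (H : Fin ℓ → Fin ℓ → ℤ → MvPolynomial (Fin ℓ × ℕ) F) :
    (∀ (f g h : MvPolynomial (Fin ℓ × ℕ) F) (p : ℤ),
      lambdaBracket F ℓ H f (g * h) p
        = lambdaBracket F ℓ H f g p * h + lambdaBracket F ℓ H f h p * g) ∧
    (∀ (i j : Fin ℓ) (p : ℤ),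
      lambdaBracket F ℓ H (MvPolynomial.X (i, 0)) (MvPolynomial.X (j, 0)) p
        = H j i p) := by
  refine ⟨fun f g h p => ?_, lambdaBracket_X_X F ℓ H⟩
  simp only [lambdaBracket_eq_finsum_pderiv_mul]
  exact MvPolynomial.finsum_finsum_finsum_pderiv_mul_mul _ g h

/-- The λ-bracket given by the Master Formula satisfies the left Leibniz
rule `{f_λ gh} = {f_λ g} h + {f_λ h} g`, and the recovery property: the symbol of
`{u_i ∂ u_j}_H` (with `∂` moved to the right) equals `H_{ji}(∂)`, i.e. its coefficient
of `∂^p` is `H j i p` for all `p ∈ ℤ`. -/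
theorem stmt17 (F : Type) [Field F] [CharZero F] (ℓ : ℕ)
    (H : Fin ℓ → Fin ℓ → ℤ → MvPolynomial (Fin ℓ × ℕ) F)
    (hH : ∀ j i, ∃ M : ℤ, ∀ N : ℤ, M < N → H j i N = 0) :
    (∀ (f g h : MvPolynomial (Fin ℓ × ℕ) F) (p : ℤ),
      lambdaBracket F ℓ H f (g * h) p
        = lambdaBracket F ℓ H f g p * h + lambdaBracket F ℓ H f h p * g) ∧
    (∀ (i j : Fin ℓ) (p : ℤ),
      lambdaBracket F ℓ H (MvPolynomial.X (i, 0)) (MvPolynomial.X (j, 0)) p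
        = H j i p) :=
  stmt17_general F ℓ H
end
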